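/- arXiv:1804.06566 — 5 statements merged into one kernel-verified Lean document; each statement's English description precedes it below -/
import Mathlib

section
/- For every t ≥ 0 and all x, v ∈ ℝ³, the homogeneous modulation is controlled by the distance to the light cone: |d(t,x,v)| ≤ 2·| t − |x + t·v̂| |; in particular |d(t,x,v)| ≤ 2·(1 + | t − |x + t·v̂| |). -/
/-!
Write `L = √(1 + ‖v‖²)`, `a = ⟪x, v⟫` and `s = √(a² + ‖x‖²)`. Then `d = (t/L - a - s)/L`, while
`t² - ‖x + t v̂‖² = (t/L - a)² - s²` is a difference of squares. Factoring both sides,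
`|t/L - a - s| (t/L - a + s) = |t - N| (t + N)` with `N = ‖x + t v̂‖`, and
`t + N ≤ 2t + ‖x‖ ≤ 2L (t/L - a + s)` because `‖x‖² = (s - a)(s + a)` with `s + a ≤ 2L‖x‖`.
-/

open scoped RealInnerProductSpace

noncomputable section

abbrev E3 : Type := EuclideanSpace ℝ (Fin 3)

/-- The relativistic velocity `v̂ = v / √(1+|v|²)`. -/
def vhat (v : E3) : E3 := (Real.sqrt (1 + ‖v‖ ^ 2))⁻¹ • v

/-- The homogeneous modulation `d(t,x,v)`. -/
def dmod (t : ℝ) (x v : E3) : ℝ :=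
  t / (1 + ‖v‖ ^ 2) -
    (⟪x, v⟫ + Real.sqrt (⟪x, v⟫ ^ 2 + ‖x‖ ^ 2)) / Real.sqrt (1 + ‖v‖ ^ 2)

theorem abs_sub_le_mul_abs_sub_of_sq_sub_sq_eq {p s t n c K : ℝ} (hc : 0 ≤ c)
    (h : p ^ 2 - s ^ 2 = t ^ 2 - n ^ 2) (htn : 0 ≤ t + n) (hle : t + n ≤ c * (p + s))
    (hs₀ : 0 ≤ s) (hs : s ≤ K * (t + n)) : |p - s| ≤ c * |t - n| := by
  rcases htn.eq_or_lt with htn | htn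
  · have hs : s = 0 := by rw [← htn, mul_zero] at hs; exact hs.antisymm hs₀
    have hp : p = 0 := pow_eq_zero_iff two_ne_zero |>.1 <| by
      rw [hs] at h
      linear_combination h + (n - t) * htn
    simp only [hp, hs, sub_zero, abs_zero]
    positivity
  · have hps : 0 < p + s := pos_of_mul_pos_right (htn.trans_le hle) hc
    have hprod : |p - s| * (p + s) = |t - n| * (t + n) := by
      rw [← abs_of_pos hps, ← abs_mul, ← abs_of_pos htn, ← abs_mul]
      congr 1
      linear_combination h
    refine le_of_mul_le_mul_right ?_ hps
    rw [hprod, mul_assoc]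
    exact mul_le_mul_of_nonneg_left hle (abs_nonneg _) |>.trans_eq (by ring)

section InnerProductSpace

variable {E : Type*} [NormedAddCommGroup E] [InnerProductSpace ℝ E]

theorem sqrt_inner_sq_add_norm_sq_le (x v : E) :
    √(⟪x, v⟫ ^ 2 + ‖x‖ ^ 2) ≤ √(1 + ‖v‖ ^ 2) * ‖x‖ := by
  have h : ⟪x, v⟫ ^ 2 ≤ (‖x‖ * ‖v‖) ^ 2 := by
    rw [← sq_abs]
    gcongr
    exact abs_real_inner_le_norm x v
  calc √(⟪x, v⟫ ^ 2 + ‖x‖ ^ 2) ≤ √((1 + ‖v‖ ^ 2) * ‖x‖ ^ 2) := Real.sqrt_le_sqrt (by nlinarith)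
    _ = √(1 + ‖v‖ ^ 2) * ‖x‖ := by rw [Real.sqrt_mul (by positivity), Real.sqrt_sq (norm_nonneg x)]

theorem norm_le_two_mul_sqrt_mul_sub_inner (x v : E) :
    ‖x‖ ≤ 2 * √(1 + ‖v‖ ^ 2) * (√(⟪x, v⟫ ^ 2 + ‖x‖ ^ 2) - ⟪x, v⟫) := by
  have hs := sqrt_inner_sq_add_norm_sq_le x v
  set s := √(⟪x, v⟫ ^ 2 + ‖x‖ ^ 2)
  have hs2 : s ^ 2 = ⟪x, v⟫ ^ 2 + ‖x‖ ^ 2 := Real.sq_sqrt (by positivity)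
  have has : |⟪x, v⟫| ≤ s := Real.abs_le_sqrt (by nlinarith)
  have hsa : 0 ≤ s - ⟪x, v⟫ := by linarith [le_abs_self ⟪x, v⟫]
  rcases (norm_nonneg x).eq_or_lt with hx | hx
  · rw [← hx]
    positivity
  · refine le_of_mul_le_mul_right ?_ hx
    nlinarith [neg_abs_le ⟪x, v⟫]

end InnerProductSpace

theorem norm_vhat_le_one (v : E3) : ‖vhat v‖ ≤ 1 := by
  have hL : 0 < √(1 + ‖v‖ ^ 2) := Real.sqrt_pos.2 (by positivity)
  rw [vhat, norm_smul, norm_inv, Real.norm_of_nonneg hL.le, inv_mul_le_iff₀ hL, mul_one]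
  exact Real.le_sqrt_of_sq_le (by linarith)

theorem sq_sub_norm_add_smul_vhat_sq (t : ℝ) (x v : E3) :
    t ^ 2 - ‖x + t • vhat v‖ ^ 2 =
      (t / √(1 + ‖v‖ ^ 2) - ⟪x, v⟫) ^ 2 - (⟪x, v⟫ ^ 2 + ‖x‖ ^ 2) := by
  have hL : 0 < √(1 + ‖v‖ ^ 2) := Real.sqrt_pos.2 (by positivity)
  have hL2 : √(1 + ‖v‖ ^ 2) ^ 2 = 1 + ‖v‖ ^ 2 := Real.sq_sqrt (by positivity)
  rw [norm_add_sq_real, vhat, inner_smul_right, inner_smul_right, norm_smul, norm_smul, norm_inv,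
    Real.norm_of_nonneg hL.le, Real.norm_eq_abs, mul_pow, mul_pow, sq_abs]
  field_simp
  linear_combination t ^ 2 * hL2

theorem dmod_eq (t : ℝ) (x v : E3) :
    dmod t x v =
      (t / √(1 + ‖v‖ ^ 2) - ⟪x, v⟫ - √(⟪x, v⟫ ^ 2 + ‖x‖ ^ 2)) / √(1 + ‖v‖ ^ 2) := by
  rw [dmod, sub_sub, sub_div, div_div, ← sq, Real.sq_sqrt (by positivity)]

/-- The homogeneous modulation is controlled by the distance to the light cone. -/
theorem stmt1 (t : ℝ) (ht : 0 ≤ t) (x v : E3) :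
    |dmod t x v| ≤ 2 * |t - ‖x + t • vhat v‖| ∧
      |dmod t x v| ≤ 2 * (1 + |t - ‖x + t • vhat v‖|) := by
  have hsq := sq_sub_norm_add_smul_vhat_sq t x v
  have hsL := sqrt_inner_sq_add_norm_sq_le x v
  have hgap := norm_le_two_mul_sqrt_mul_sub_inner x v
  rw [dmod_eq]
  set L := √(1 + ‖v‖ ^ 2)
  set s := √(⟪x, v⟫ ^ 2 + ‖x‖ ^ 2)
  set N := ‖x + t • vhat v‖
  have hL : 0 < L := Real.sqrt_pos.2 (by positivity)
  have hvt : ‖t • vhat v‖ ≤ t := by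
    rw [norm_smul, Real.norm_of_nonneg ht]
    exact mul_le_of_le_one_right ht (norm_vhat_le_one v)
  have hxN : ‖x‖ ≤ N + t := calc
    ‖x‖ = ‖(x + t • vhat v) - t • vhat v‖ := by rw [add_sub_cancel_right]
    _ ≤ N + t := (norm_sub_le _ _).trans (by linarith)
  have hNx : N ≤ ‖x‖ + t := (norm_add_le _ _).trans (by linarith)
  have key : |t / L - ⟪x, v⟫ - s| ≤ 2 * L * |t - N| :=
    abs_sub_le_mul_abs_sub_of_sq_sub_sq_eq (K := L) (by positivity)
      (by rw [Real.sq_sqrt (by positivity), hsq]) (by positivity)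
      (by rw [mul_add, mul_sub, mul_assoc, mul_div_cancel₀ _ hL.ne']; linarith)
      (Real.sqrt_nonneg _) (hsL.trans (by gcongr; linarith))
  have hd : |(t / L - ⟪x, v⟫ - s) / L| ≤ 2 * |t - N| := by
    rw [abs_div, abs_of_pos hL, div_le_iff₀ hL]
    linarith
  exact ⟨hd, hd.trans (by linarith [abs_nonneg (t - N)])⟩
end
end

section
/- There exists a universal constant c > 0 such that for all v, η ∈ ℝ³ with v ≠ 0 and η ≠ 0 one has the hidden null structure estimate: |η| − (v·η)/√(1+|v|²) ≥ c·( |η|/(1+|v|²) + Σ_{i=1}^{3} ((eᵢ × v)·η)² / (|v|²·|η|) ). Consequently, if |η| − (v·η)/√(1+|v|²) ≤ δ·|η| for some δ > 0, then 1/(1+|v|²) ≤ δ/c and Σ_{i=1}^{3} ((eᵢ × v)·η)²/(|v|²|η|²) ≤ δ/c. -/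
/-!
Write `g = √(1 + |v|²)`. Because `g² = 1 + |v|²`, the phase `|η| - v·η/g` exceeds half of
`|η|/g² + (|v|²|η|² - (v·η)²)/(|v|²|η|)` by exactly the square `(|v|²|η|/g - v·η)² / (2|v|²|η|)`,
and by Lagrange's identity `(|v|²|η|² - (v·η)²)` is the sum of the `((eᵢ × v)·η)²`. So `c = 1/2`
works; the consequences follow by dividing the estimate by `|η|`.
-/

open scoped RealInnerProductSpace

noncomputable section

/-- The standard orthonormal basis vectors `e₁, e₂, e₃` of `ℝ³`. -/
def stdB (i : Fin 3) : E3 := EuclideanSpace.single i (1 : ℝ)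

/-- The cross product on `ℝ³`. -/
def cross3 (a b : E3) : E3 :=
  EuclideanSpace.single 0 (a 1 * b 2 - a 2 * b 1) +
    EuclideanSpace.single 1 (a 2 * b 0 - a 0 * b 2) +
    EuclideanSpace.single 2 (a 0 * b 1 - a 1 * b 0)

section InnerProductSpace

variable {F : Type*} [NormedAddCommGroup F] [InnerProductSpace ℝ F]

theorem phase_sub_half_eq {v η : F} (hv : v ≠ 0) (hη : η ≠ 0) :
    ‖η‖ - ⟪v, η⟫ / √(1 + ‖v‖ ^ 2) -
        (1 / 2) * (‖η‖ / (1 + ‖v‖ ^ 2) + (‖v‖ ^ 2 * ‖η‖ ^ 2 - ⟪v, η⟫ ^ 2) / (‖v‖ ^ 2 * ‖η‖)) =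
      (‖v‖ ^ 2 * ‖η‖ / √(1 + ‖v‖ ^ 2) - ⟪v, η⟫) ^ 2 / (2 * ‖v‖ ^ 2 * ‖η‖) := by
  have hV : ‖v‖ ≠ 0 := norm_ne_zero_iff.mpr hv
  have hH : ‖η‖ ≠ 0 := norm_ne_zero_iff.mpr hη
  have hg2 : √(1 + ‖v‖ ^ 2) ^ 2 = 1 + ‖v‖ ^ 2 := Real.sq_sqrt (by positivity)
  set g := √(1 + ‖v‖ ^ 2)
  have hg : g ≠ 0 := by positivity
  field_simp
  linear_combination ‖η‖ ^ 2 * ‖v‖ ^ 4 * hg2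

theorem half_mul_le_phase {v η : F} (hv : v ≠ 0) (hη : η ≠ 0) :
    (1 / 2) * (‖η‖ / (1 + ‖v‖ ^ 2) + (‖v‖ ^ 2 * ‖η‖ ^ 2 - ⟪v, η⟫ ^ 2) / (‖v‖ ^ 2 * ‖η‖)) ≤
      ‖η‖ - ⟪v, η⟫ / √(1 + ‖v‖ ^ 2) := by
  have hgap := phase_sub_half_eq hv hη
  have hsq : 0 ≤ (‖v‖ ^ 2 * ‖η‖ / √(1 + ‖v‖ ^ 2) - ⟪v, η⟫) ^ 2 / (2 * ‖v‖ ^ 2 * ‖η‖) := by positivity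
  linarith

end InnerProductSpace

theorem le_div_and_le_div_of_mul_add_le {a b c d t : ℝ} (hc : 0 < c) (ht : 0 < t) (ha : 0 ≤ a)
    (hb : 0 ≤ b) (h : c * (t * a + t * b) ≤ d * t) : a ≤ d / c ∧ b ≤ d / c := by
  rw [le_div_iff₀ hc, le_div_iff₀ hc]
  constructor <;> nlinarith [mul_nonneg ht.le ha, mul_nonneg ht.le hb]

theorem sum_inner_cross3_stdB_sq (v η : E3) :
    ∑ i : Fin 3, ⟪cross3 (stdB i) v, η⟫ ^ 2 = ‖v‖ ^ 2 * ‖η‖ ^ 2 - ⟪v, η⟫ ^ 2 := by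
  simp only [← real_inner_self_eq_norm_sq, cross3, stdB, PiLp.inner_apply, RCLike.inner_apply,
    conj_trivial, Fin.sum_univ_three, PiLp.add_apply, PiLp.single_apply, Fin.reduceEq,
    reduceIte]
  ring

/-- The hidden null structure estimate for the phase `|η| - v̂·η`, together with its
consequence near the time-resonance set. -/
theorem stmt2 :
    ∃ c : ℝ, 0 < c ∧
      (∀ v η : E3, v ≠ 0 → η ≠ 0 →
        c * (‖η‖ / (1 + ‖v‖ ^ 2) +
            ∑ i : Fin 3, ⟪cross3 (stdB i) v, η⟫ ^ 2 / (‖v‖ ^ 2 * ‖η‖)) ≤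
          ‖η‖ - ⟪v, η⟫ / Real.sqrt (1 + ‖v‖ ^ 2)) ∧
      (∀ v η : E3, ∀ δ : ℝ, v ≠ 0 → η ≠ 0 → 0 < δ →
        ‖η‖ - ⟪v, η⟫ / Real.sqrt (1 + ‖v‖ ^ 2) ≤ δ * ‖η‖ →
        1 / (1 + ‖v‖ ^ 2) ≤ δ / c ∧
          (∑ i : Fin 3, ⟪cross3 (stdB i) v, η⟫ ^ 2 / (‖v‖ ^ 2 * ‖η‖ ^ 2)) ≤ δ / c) := by
  refine ⟨1 / 2, by norm_num, fun v η hv hη => ?_, fun v η δ hv hη _ hle => ?_⟩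
  · rw [← Finset.sum_div, sum_inner_cross3_stdB_sq]
    exact half_mul_le_phase hv hη
  · have hη' : 0 < ‖η‖ := norm_pos_iff.mpr hη
    have key := (half_mul_le_phase hv hη).trans hle
    refine le_div_and_le_div_of_mul_add_le (by norm_num) hη' (by positivity)
      (Finset.sum_nonneg fun i _ => by positivity) (key.trans_eq' ?_)
    rw [← Finset.sum_div, sum_inner_cross3_stdB_sq]
    field_simp
end
end

section
/- There exists a universal constant c > 0 such that for every sign μ ∈ {+1, −1}, every j ∈ {1,2,3}, every v ∈ ℝ³ with v ≠ 0, and every ξ ∈ ℝ³: |ξ| − μ·(v·ξ)/√(1+|v|²) ≥ c·|(e_j × v)·ξ| / ( |v|·(1+|v|) ). -/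
open scoped RealInnerProductSpace

noncomputable section

/-!
The vector `w = e_j × v` is orthogonal to `v` and `|w| ≤ |v|`, so `|w·ξ|` only sees the part of `ξ`
orthogonal to `v`: `(w·ξ)² + (v·ξ)² ≤ |v|²|ξ|²`. With `s = √(1+|v|²) > |v|`,
`(s|ξ| − |v·ξ|)(s|ξ| + |v·ξ|) = s²|ξ|² − (v·ξ)² ≥ |ξ|² + (w·ξ)²`, and AM–GM together with
`|w·ξ| ≤ |v||ξ|` turns this into `|w·ξ| ≤ 3|v|(1+|v|)(|ξ| − μ v̂·ξ)`.
-/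

open scoped Matrix

lemma le_mul_sub_div_sqrt_one_add_sq {V N p t μ : ℝ} (hV : 0 ≤ V) (hN : 0 ≤ N) (ht : 0 ≤ t)
    (htp : t ^ 2 + p ^ 2 ≤ V ^ 2 * N ^ 2) (hμ : |μ| ≤ 1) :
    t ≤ 3 * V * (1 + V) * (N - μ * p / Real.sqrt (1 + V ^ 2)) := by
  set s := Real.sqrt (1 + V ^ 2)
  have hs2 : s ^ 2 = 1 + V ^ 2 := Real.sq_sqrt (by positivity)
  have hs1 : 1 ≤ s := Real.one_le_sqrt.mpr (by nlinarith)
  have hVs : V ≤ s := Real.le_sqrt_of_sq_le (by linarith)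
  have hpVN : |p| ≤ V * N :=
    sq_le_sq₀ (abs_nonneg p) (by positivity) |>.mp (by nlinarith [sq_abs p])
  have htVN : t ≤ V * N := sq_le_sq₀ ht (by positivity) |>.mp (by nlinarith)
  have hμp : μ * p ≤ |p| :=
    (le_abs_self _).trans (by rw [abs_mul]; exact mul_le_of_le_one_left (abs_nonneg p) hμ)
  set y := s * N - |p|
  have hy : 0 ≤ y := by nlinarith
  -- `y (sN + |p|) = s²N² - p² ≥ N² + t²` and `sN + |p| ≤ 2sN`
  have hyN : N ^ 2 + t ^ 2 ≤ 2 * s * N * y := by nlinarith [sq_abs p]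
  have hty : s * t ≤ 3 * V * (1 + V) * y := by
    rcases hN.eq_or_lt with rfl | hN
    · nlinarith
    have h_large : t ≤ s * y := by nlinarith [sq_nonneg (N - t)]
    have h_small : t ≤ 2 * V * s * y := by nlinarith
    rcases le_total V (1 / 2) with hV2 | hV2
    · nlinarith
    · nlinarith
  calc t ≤ 3 * V * (1 + V) * (y / s) := by
        rw [mul_div_assoc']; exact (le_div_iff₀ (by positivity)).mpr (by linarith)
    _ ≤ 3 * V * (1 + V) * (N - μ * p / s) := by
        gcongr
        rw [sub_div, mul_div_cancel_left₀ _ (by positivity)]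
        gcongr

section InnerProductSpace

variable {F : Type*} [NormedAddCommGroup F] [InnerProductSpace ℝ F]

lemma sq_norm_mul_sq_inner_le_of_inner_eq_zero {v w : F} (hwv : ⟪w, v⟫ = 0) (ξ : F) :
    ‖v‖ ^ 2 * ⟪w, ξ⟫ ^ 2 ≤ ‖w‖ ^ 2 * (‖v‖ ^ 2 * ‖ξ‖ ^ 2 - ⟪v, ξ⟫ ^ 2) := by
  rcases eq_or_ne v 0 with rfl | hv
  · simp
  -- `u` is `‖v‖²` times the component of `ξ` orthogonal to `v`
  set u := ‖v‖ ^ 2 • ξ - ⟪v, ξ⟫ • v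
  have hwu : ⟪w, u⟫ = ‖v‖ ^ 2 * ⟪w, ξ⟫ := by
    simp only [u, inner_sub_right, real_inner_smul_right, hwv]; ring
  have huu : ⟪u, u⟫ = ‖v‖ ^ 2 * (‖v‖ ^ 2 * ‖ξ‖ ^ 2 - ⟪v, ξ⟫ ^ 2) := by
    simp only [u, inner_sub_left, inner_sub_right, real_inner_smul_left, real_inner_smul_right]
    rw [real_inner_self_eq_norm_sq, real_inner_self_eq_norm_sq, real_inner_comm ξ v]
    ring
  have hcs := real_inner_mul_inner_self_le w u
  rw [hwu, huu, real_inner_self_eq_norm_sq] at hcs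
  have hv2 : 0 < ‖v‖ ^ 2 := by positivity
  nlinarith

lemma inner_sq_add_inner_sq_le_of_inner_eq_zero {v w : F} (hv : v ≠ 0) (hwv : ⟪w, v⟫ = 0)
    (hwn : ‖w‖ ≤ ‖v‖) (ξ : F) : ⟪w, ξ⟫ ^ 2 + ⟪v, ξ⟫ ^ 2 ≤ ‖v‖ ^ 2 * ‖ξ‖ ^ 2 := by
  have hcs : ⟪v, ξ⟫ ^ 2 ≤ ‖v‖ ^ 2 * ‖ξ‖ ^ 2 := by
    rw [← mul_pow, ← sq_abs]; gcongr; exact abs_real_inner_le_norm v ξ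
  have h := sq_norm_mul_sq_inner_le_of_inner_eq_zero hwv ξ
  have hv2 : 0 < ‖v‖ ^ 2 := by positivity
  have hw2 : ‖w‖ ^ 2 ≤ ‖v‖ ^ 2 := by gcongr
  nlinarith [mul_le_mul_of_nonneg_right hw2 (sub_nonneg.mpr hcs)]

lemma abs_inner_div_le_sub_div_sqrt_of_inner_eq_zero {v w : F} (hv : v ≠ 0)
    (hwv : ⟪w, v⟫ = 0) (hwn : ‖w‖ ≤ ‖v‖) {μ : ℝ} (hμ : |μ| ≤ 1) (ξ : F) :
    1 / 3 * |⟪w, ξ⟫| / (‖v‖ * (1 + ‖v‖)) ≤ ‖ξ‖ - μ * ⟪v, ξ⟫ / Real.sqrt (1 + ‖v‖ ^ 2) := by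
  have h := le_mul_sub_div_sqrt_one_add_sq (p := ⟪v, ξ⟫) (norm_nonneg v) (norm_nonneg ξ)
    (abs_nonneg ⟪w, ξ⟫)
    (by rw [sq_abs]; exact inner_sq_add_inner_sq_le_of_inner_eq_zero hv hwv hwn ξ) hμ
  have hv : 0 < ‖v‖ := norm_pos_iff.mpr hv
  rw [div_le_iff₀ (by positivity)]
  linarith

end InnerProductSpace

lemma cross3_eq_toLp_crossProduct (a b : E3) :
    cross3 a b = WithLp.toLp 2 (a.ofLp ⨯₃ b.ofLp) := by
  ext i; fin_cases i <;> simp [cross3, cross_apply]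

lemma inner_cross3_self_right (a b : E3) : ⟪cross3 a b, b⟫ = 0 := by
  rw [cross3_eq_toLp_crossProduct, EuclideanSpace.inner_eq_star_dotProduct, star_trivial]
  exact dot_cross_self _ _

lemma norm_cross3_stdB_le (j : Fin 3) (v : E3) : ‖cross3 (stdB j) v‖ ≤ ‖v‖ := by
  rw [cross3_eq_toLp_crossProduct, InnerProductGeometry.norm_ofLp_crossProduct]
  have he : ‖stdB j‖ = 1 := by simp [stdB]
  rw [he, one_mul]
  exact mul_le_of_le_one_right (norm_nonneg v) (Real.sin_le_one _)

/-- The good rotational symbol `(e_j × v)·ξ / |v|` is dominated, up to the factor `1+|v|`,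
by the phase `|ξ| - μ v̂·ξ`. -/
theorem stmt3 :
    ∃ c : ℝ, 0 < c ∧
      ∀ μ : ℝ, (μ = 1 ∨ μ = -1) → ∀ (j : Fin 3) (v : E3), v ≠ 0 → ∀ ξ : E3,
        c * |⟪cross3 (stdB j) v, ξ⟫| / (‖v‖ * (1 + ‖v‖)) ≤
          ‖ξ‖ - μ * ⟪v, ξ⟫ / Real.sqrt (1 + ‖v‖ ^ 2) := by
  refine ⟨1 / 3, by norm_num, fun μ hμ j v hv ξ => ?_⟩
  have hμ : |μ| ≤ 1 := by rcases hμ with rfl | rfl <;> norm_num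
  exact abs_inner_div_le_sub_div_sqrt_of_inner_eq_zero hv (inner_cross3_self_right _ v)
    (norm_cross3_stdB_le j v) hμ ξ
end
end

section
/- Let t > 0 and x, v ∈ ℝ³ with v ≠ 0. Assume |x| ≥ 16·t/|v| and −2^{−10}·|x|²·|v|/t ≤ x·v ≤ 0. Then the distance to the light cone satisfies the lower bound | t − |x + t·v̂| | ≥ |x|² / ( 4·(t + |x|) ); in particular 1/(1 + | t − |x + t·v̂| |) ≤ 4·(t + |x|)/|x|². -/
open scoped RealInnerProductSpace

noncomputable section

/-! Since `|v̂| ≤ 1`, the point `x + t v̂` lies within `t` of `x`, so `r := |x + t v̂|` satisfies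
`r + t ≤ 2 (t + |x|)`, and `r - t = (r² - t²)/(r + t)`. Expanding,
`r² - t² = |x|² + 2 t (x·v)/√(1+|v|²) - t²/(1+|v|²)`; the two hypotheses on `x` make the last two
terms small compared with `|x|²`, so `r² - t² ≥ |x|²/2` and hence `r - t ≥ |x|²/(4(t + |x|))`. -/

section LightCone

variable {E : Type*} [NormedAddCommGroup E] [InnerProductSpace ℝ E]

theorem sq_div_le_norm_add_smul_sub {x w : E} {t : ℝ} (ht : 0 ≤ t) (hw : ‖w‖ ≤ 1)
    (hsq : ‖x‖ ^ 2 / 2 ≤ ‖x + t • w‖ ^ 2 - t ^ 2) :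
    ‖x‖ ^ 2 / (4 * (t + ‖x‖)) ≤ ‖x + t • w‖ - t := by
  set r := ‖x + t • w‖
  have hr_le : r ≤ ‖x‖ + t :=
    calc r ≤ ‖x‖ + ‖t • w‖ := norm_add_le _ _
      _ = ‖x‖ + t * ‖w‖ := by rw [norm_smul, Real.norm_of_nonneg ht]
      _ ≤ ‖x‖ + t := by gcongr; exact mul_le_of_le_one_right ht hw
  have ht_le : t ≤ r :=
    (pow_le_pow_iff_left₀ ht (norm_nonneg _) two_ne_zero).1 (by nlinarith [sq_nonneg ‖x‖])
  refine div_le_of_le_mul₀ (by positivity) (sub_nonneg.2 ht_le) ?_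
  nlinarith [mul_le_mul_of_nonneg_left (show r + t ≤ 2 * (t + ‖x‖) by linarith)
    (sub_nonneg.2 ht_le)]

end LightCone

theorem sqrt_one_add_norm_sq_pos (v : E3) : 0 < √(1 + ‖v‖ ^ 2) :=
  Real.sqrt_pos.2 (by positivity)

theorem norm_le_sqrt_one_add_norm_sq (v : E3) : ‖v‖ ≤ √(1 + ‖v‖ ^ 2) :=
  Real.le_sqrt_of_sq_le (by linarith)

theorem norm_vhat (v : E3) : ‖vhat v‖ = ‖v‖ / √(1 + ‖v‖ ^ 2) := by
  rw [vhat, norm_smul, norm_inv, Real.norm_of_nonneg (Real.sqrt_nonneg _), inv_mul_eq_div]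

theorem norm_add_smul_vhat_sq_sub_sq (x v : E3) (t : ℝ) :
    ‖x + t • vhat v‖ ^ 2 - t ^ 2 =
      ‖x‖ ^ 2 + 2 * t * (⟪x, v⟫ / √(1 + ‖v‖ ^ 2)) - (t / √(1 + ‖v‖ ^ 2)) ^ 2 := by
  have hs := sqrt_one_add_norm_sq_pos v
  have hs2 : √(1 + ‖v‖ ^ 2) ^ 2 = 1 + ‖v‖ ^ 2 := Real.sq_sqrt (by positivity)
  rw [norm_add_sq_real, real_inner_smul_right, norm_smul, Real.norm_eq_abs, mul_pow, sq_abs,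
    norm_vhat, vhat, real_inner_smul_right]
  field_simp
  rw [hs2]
  ring

theorem half_sq_le_norm_add_smul_vhat_sq_sub_sq {t : ℝ} (ht : 0 < t) {x v : E3} (hv : v ≠ 0)
    (hx : 16 * t / ‖v‖ ≤ ‖x‖)
    (hlow : -((2 : ℝ) ^ (-(10 : ℤ)) * ‖x‖ ^ 2 * ‖v‖ / t) ≤ ⟪x, v⟫) :
    ‖x‖ ^ 2 / 2 ≤ ‖x + t • vhat v‖ ^ 2 - t ^ 2 := by
  rw [norm_add_smul_vhat_sq_sub_sq]
  set s := √(1 + ‖v‖ ^ 2)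
  have hs : 0 < s := sqrt_one_add_norm_sq_pos v
  have hvs : ‖v‖ ≤ s := norm_le_sqrt_one_add_norm_sq v
  have hv0 : 0 < ‖v‖ := norm_pos_iff.2 hv
  have hts : t / s ≤ ‖x‖ / 16 :=
    calc t / s ≤ t / ‖v‖ := div_le_div_of_nonneg_left ht.le hv0 hvs
      _ ≤ ‖x‖ / 16 := by rw [mul_div_assoc] at hx; linarith
  have hinner : -(2 ^ (-(10 : ℤ)) * ‖x‖ ^ 2) ≤ t * (⟪x, v⟫ / s) :=
    calc -(2 ^ (-(10 : ℤ)) * ‖x‖ ^ 2) ≤ -(2 ^ (-(10 : ℤ)) * ‖x‖ ^ 2 * ‖v‖) / s := by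
          rw [neg_div, neg_le_neg_iff, div_le_iff₀ hs]; gcongr
      _ = t * -(2 ^ (-(10 : ℤ)) * ‖x‖ ^ 2 * ‖v‖ / t) / s := by field_simp
      _ ≤ t * ⟪x, v⟫ / s := by gcongr
      _ = t * (⟪x, v⟫ / s) := mul_div_assoc _ _ _
  have hts2 : (t / s) ^ 2 ≤ (‖x‖ / 16) ^ 2 := pow_le_pow_left₀ (by positivity) hts 2
  rw [show (2 : ℝ) ^ (-(10 : ℤ)) = 1 / 1024 by norm_num] at hinner
  nlinarith

theorem stmt7_general (t : ℝ) (ht : 0 < t) (x v : E3) (hv : v ≠ 0)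
    (hx : 16 * t / ‖v‖ ≤ ‖x‖)
    (hlow : -((2 : ℝ) ^ (-(10 : ℤ)) * ‖x‖ ^ 2 * ‖v‖ / t) ≤ ⟪x, v⟫) :
    ‖x‖ ^ 2 / (4 * (t + ‖x‖)) ≤ |t - ‖x + t • vhat v‖| ∧
      1 / (1 + |t - ‖x + t • vhat v‖|) ≤ 4 * (t + ‖x‖) / ‖x‖ ^ 2 := by
  have hx0 : 0 < ‖x‖ := (div_pos (by positivity) (norm_pos_iff.2 hv)).trans_le hx
  have hdist : ‖x‖ ^ 2 / (4 * (t + ‖x‖)) ≤ |t - ‖x + t • vhat v‖| := by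
    rw [abs_sub_comm]
    exact (sq_div_le_norm_add_smul_sub ht.le (norm_vhat_le_one v)
      (half_sq_le_norm_add_smul_vhat_sq_sub_sq ht hv hx hlow)).trans (le_abs_self _)
  refine ⟨hdist, ?_⟩
  calc 1 / (1 + |t - ‖x + t • vhat v‖|) ≤ 1 / (‖x‖ ^ 2 / (4 * (t + ‖x‖))) :=
        one_div_le_one_div_of_le (by positivity) (by linarith)
    _ = 4 * (t + ‖x‖) / ‖x‖ ^ 2 := one_div_div _ _

/-- In the region where `x·v` is negative but not too negative and `|x| ≥ 16 t/|v|`, the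
point `(x, v)` is far from the light cone `t = |x + t v̂|`. -/
theorem stmt7 (t : ℝ) (ht : 0 < t) (x v : E3) (hv : v ≠ 0)
    (hx : 16 * t / ‖v‖ ≤ ‖x‖)
    (hlow : -((2 : ℝ) ^ (-(10 : ℤ)) * ‖x‖ ^ 2 * ‖v‖ / t) ≤ ⟪x, v⟫)
    (hup : ⟪x, v⟫ ≤ 0) :
    ‖x‖ ^ 2 / (4 * (t + ‖x‖)) ≤ |t - ‖x + t • vhat v‖| ∧
      1 / (1 + |t - ‖x + t • vhat v‖|) ≤ 4 * (t + ‖x‖) / ‖x‖ ^ 2 :=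
  stmt7_general t ht x v hv hx hlow
end
end

section
/- There exists a universal constant C > 0 such that for every t ≥ 0 and all x, v ∈ ℝ³ with x·v ≤ 0: |d(t,x,v)| · ( t + (1+|v|)·( |x·v| + |x| ) ) ≤ C·( t + |x| )·| t − |x + t·v̂| |. In particular, in the region x·v ≤ 0 the modulation d(t,x,v) is smaller than the distance to the light cone by the factor (t+|x|)/( t + (1+|v|)(|x·v|+|x|) ). -/
open scoped RealInnerProductSpace

noncomputable section

/-!
Write `γ = √(1+|v|²)`, `a = x·v` and `ρ = √(a² + |x|²)`, so that `γ d = t/γ - a - ρ`.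
Multiplying by the conjugate `P = t/γ - a + ρ` (`dmodConj`) gives `γ d P = t² - |x + t v̂|²`, the product of the
distance `t - |x + t v̂|` to the light cone and `t + |x + t v̂| ≤ 2(t + |x|)`. When `a ≤ 0`,
`γ P = t + γ(ρ + |a|)` is at least half of `t + (1+|v|)(|a| + |x|)`, because `1 + |v| ≤ 2γ` and
`ρ ≥ |x|`. Hence the claim holds with `C = 4`.
-/

def dmodConj (t : ℝ) (x v : E3) : ℝ :=
  t / √(1 + ‖v‖ ^ 2) - ⟪x, v⟫ + √(⟪x, v⟫ ^ 2 + ‖x‖ ^ 2)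

namespace Real

theorem one_add_le_two_mul_sqrt_one_add_sq (y : ℝ) :
    1 + y ≤ 2 * √(1 + y ^ 2) := by
  have h1 : 1 ≤ √(1 + y ^ 2) := one_le_sqrt.mpr (by nlinarith)
  have h2 : y ≤ √(1 + y ^ 2) := le_sqrt_of_sq_le (by linarith)
  linarith

end Real

section LightCone

variable (x v : E3)

theorem norm_add_smul_vhat_le {t : ℝ} (ht : 0 ≤ t) : ‖x + t • vhat v‖ ≤ ‖x‖ + t :=
  calc ‖x + t • vhat v‖ ≤ ‖x‖ + t * ‖vhat v‖ := by
        simpa [norm_smul, abs_of_nonneg ht] using norm_add_le x (t • vhat v)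
    _ ≤ ‖x‖ + t := by nlinarith [norm_vhat_le_one v]

theorem norm_add_smul_vhat_sq (t : ℝ) :
    ‖x + t • vhat v‖ ^ 2 =
      ‖x‖ ^ 2 + 2 * t * ⟪x, v⟫ / √(1 + ‖v‖ ^ 2) + t ^ 2 * ‖v‖ ^ 2 / (1 + ‖v‖ ^ 2) := by
  have hs : √(1 + ‖v‖ ^ 2) ^ 2 = 1 + ‖v‖ ^ 2 := Real.sq_sqrt (by positivity)
  rw [norm_add_sq_real, norm_smul, norm_vhat, vhat, inner_smul_right, inner_smul_right,
    Real.norm_eq_abs, mul_pow, sq_abs, div_pow, hs]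
  ring

theorem sqrt_mul_dmod (t : ℝ) :
    √(1 + ‖v‖ ^ 2) * dmod t x v =
      t / √(1 + ‖v‖ ^ 2) - (⟪x, v⟫ + √(⟪x, v⟫ ^ 2 + ‖x‖ ^ 2)) := by
  have hs : √(1 + ‖v‖ ^ 2) ^ 2 = 1 + ‖v‖ ^ 2 := Real.sq_sqrt (by positivity)
  have hs0 : √(1 + ‖v‖ ^ 2) ≠ 0 := (Real.sqrt_pos.mpr (by positivity)).ne'
  rw [dmod]
  set s := √(1 + ‖v‖ ^ 2)
  rw [← hs]
  field_simp

theorem sqrt_mul_dmod_mul_dmodConj (t : ℝ) :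
    √(1 + ‖v‖ ^ 2) * dmod t x v * dmodConj t x v =
      t ^ 2 - ‖x + t • vhat v‖ ^ 2 := by
  have hs : √(1 + ‖v‖ ^ 2) ^ 2 = 1 + ‖v‖ ^ 2 := Real.sq_sqrt (by positivity)
  have hs0 : √(1 + ‖v‖ ^ 2) ≠ 0 := (Real.sqrt_pos.mpr (by positivity)).ne'
  have hρ : √(⟪x, v⟫ ^ 2 + ‖x‖ ^ 2) ^ 2 = ⟪x, v⟫ ^ 2 + ‖x‖ ^ 2 := Real.sq_sqrt (by positivity)
  rw [sqrt_mul_dmod, norm_add_smul_vhat_sq, dmodConj]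
  set s := √(1 + ‖v‖ ^ 2)
  rw [← hs]
  field_simp
  linear_combination (-s ^ 2) * hρ - t ^ 2 * hs

theorem weight_le_two_mul_sqrt_mul_dmodConj {t : ℝ} (ht : 0 ≤ t) (hxv : ⟪x, v⟫ ≤ 0) :
    t + (1 + ‖v‖) * (|⟪x, v⟫| + ‖x‖) ≤ 2 * (√(1 + ‖v‖ ^ 2) * dmodConj t x v) := by
  have hs : 0 < √(1 + ‖v‖ ^ 2) := Real.sqrt_pos.mpr (by positivity)
  have hρ : ‖x‖ ≤ √(⟪x, v⟫ ^ 2 + ‖x‖ ^ 2) :=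
    Real.le_sqrt_of_sq_le (by nlinarith [sq_nonneg ⟪x, v⟫])
  have hγ := Real.one_add_le_two_mul_sqrt_one_add_sq ‖v‖
  have hsP : √(1 + ‖v‖ ^ 2) * dmodConj t x v =
      t + √(1 + ‖v‖ ^ 2) * (|⟪x, v⟫| + √(⟪x, v⟫ ^ 2 + ‖x‖ ^ 2)) := by
    rw [dmodConj, abs_of_nonpos hxv]; field_simp; ring
  rw [hsP]
  nlinarith [abs_nonneg ⟪x, v⟫, norm_nonneg x, norm_nonneg v]

end LightCone

/-- In the region `x·v ≤ 0` the modulation `d(t,x,v)` is smaller than the distance to the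
light cone by the factor `(t+|x|) / (t + (1+|v|)(|x·v|+|x|))`. -/
theorem stmt8 :
    ∃ C : ℝ, 0 < C ∧
      ∀ t : ℝ, 0 ≤ t → ∀ x v : E3, ⟪x, v⟫ ≤ 0 →
        |dmod t x v| * (t + (1 + ‖v‖) * (|⟪x, v⟫| + ‖x‖)) ≤
          C * (t + ‖x‖) * |t - ‖x + t • vhat v‖| := by
  refine ⟨4, by norm_num, fun t ht x v hxv => ?_⟩
  have hweight := weight_le_two_mul_sqrt_mul_dmodConj x v ht hxv
  have hN := norm_add_smul_vhat_le x v ht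
  set γP := √(1 + ‖v‖ ^ 2) * dmodConj t x v
  set N := ‖x + t • vhat v‖
  have hγP : 0 ≤ γP := by
    have : 0 ≤ t + (1 + ‖v‖) * (|⟪x, v⟫| + ‖x‖) := by positivity
    linarith
  have hconj : |dmod t x v| * γP = |t - N| * (t + N) := by
    have h : dmod t x v * γP = (t - N) * (t + N) := by
      linear_combination sqrt_mul_dmod_mul_dmodConj x v t
    rw [← abs_of_nonneg hγP, ← abs_mul, h, abs_mul, abs_of_nonneg (by positivity : 0 ≤ t + N)]
  calc |dmod t x v| * (t + (1 + ‖v‖) * (|⟪x, v⟫| + ‖x‖))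
      ≤ |dmod t x v| * (2 * γP) := mul_le_mul_of_nonneg_left hweight (abs_nonneg _)
    _ = 2 * (t + N) * |t - N| := by rw [mul_left_comm, hconj]; ring
    _ ≤ 4 * (t + ‖x‖) * |t - N| := by gcongr ?_ * _; linarith [norm_nonneg x]
end
end
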